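/- Fix a real parameter η ≥ 1. Let W, X, Y, Z be mutually independent random variables, where W, Y, Z are exponentially distributed with rate 1 and X has the Gamma distribution with shape 2 and rate 1. Then for all real numbers α₁, α₂, α_sr with 0 ≤ α₁ < 1, 0 ≤ α₂ < 1 and 0 ≤ α_sr < η, lim_{ρ → ∞} log P(W ≤ ρ^{α_sr−η} and X ≤ ρ^{α₁−1} and Y + Z/(1 + ρX) ≤ ρ^{α₂−1}) / log ρ = −s(α₁, α₂, α_sr), where s(α₁, α₂, α_sr) = η + 4 − 3α₁ − 2α₂ − α_sr if α₁ + α₂ ≤ 1 and s(α₁, α₂, α_sr) = η + 3 − 2α₁ − α₂ − α_sr if α₁ + α₂ > 1. -/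

import Mathlib

/-!
By independence, the probability of the event is, up to absolute constants, the product of
four marginal probabilities. With `a = ρ^(α_sr-η)`, `b = ρ^(α₁-1)`, `c = ρ^(α₂-1)`:
`P(W ≤ a) ≍ a`, `P(X ≤ b) ≍ b²` since the Gamma(2,1) density is `x e^{-x}`, `P(Y ≤ c) ≍ c`,
and, as `X ≍ b` on the bulk of `{X ≤ b}`, the constraint on `Z` is essentially
`Z ≲ c (1 + ρb) ≍ ρbc` (as `ρb = ρ^α₁ ≥ 1`), which has probability `≍ min(1, ρbc)`.
The product `a b² c min(1, ρ^(α₁+α₂-1))` is `ρ^(-s)`, the two branches of `s` being the two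
values of the minimum, so `log P / log ρ → -s`.
-/

open MeasureTheory Filter ProbabilityTheory

noncomputable def sExp (η α₁ α₂ αsr : ℝ) : ℝ :=
  if α₁ + α₂ ≤ 1 then η + 4 - 3 * α₁ - 2 * α₂ - αsr
  else η + 3 - 2 * α₁ - α₂ - αsr

open Real Set Topology

lemma min_one_div_two_le_one_sub_exp_neg {t : ℝ} (ht : 0 ≤ t) : min 1 t / 2 ≤ 1 - exp (-t) := by
  have hexp : exp (-t) ≤ 1 / (1 + t) := by
    rw [exp_neg, inv_eq_one_div]
    exact one_div_le_one_div_of_le (by positivity) (by linarith [add_one_le_exp t])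
  have hfrac : min 1 t / 2 ≤ 1 - 1 / (1 + t) := by
    rw [one_sub_div (by positivity), add_sub_cancel_left, le_div_iff₀ (by positivity)]
    rcases le_total t 1 with h | h
    · rw [min_eq_right h]; nlinarith
    · rw [min_eq_left h]; linarith
  linarith

lemma expMeasure_real_Iic {r t : ℝ} (hr : 0 < r) (ht : 0 ≤ t) :
    (expMeasure r).real (Iic t) = 1 - exp (-(r * t)) := by
  have := isProbabilityMeasure_expMeasure hr
  rw [← cdf_eq_real, cdf_expMeasure_eq hr, if_pos ht]

lemma expMeasure_one_real_Iic_le_min {t : ℝ} (ht : 0 ≤ t) :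
    (expMeasure 1).real (Iic t) ≤ min 1 t := by
  rw [expMeasure_real_Iic one_pos ht, one_mul]
  exact le_min (by linarith [exp_pos (-t)]) (by linarith [add_one_le_exp (-t)])

lemma min_one_div_two_le_expMeasure_one_real_Iic {t : ℝ} (ht : 0 ≤ t) :
    min 1 t / 2 ≤ (expMeasure 1).real (Iic t) := by
  rw [expMeasure_real_Iic one_pos ht, one_mul]
  exact min_one_div_two_le_one_sub_exp_neg ht

lemma gammaMeasure_Iic_zero (a r : ℝ) : gammaMeasure a r (Iic 0) = 0 := by
  rw [gammaMeasure, withDensity_apply _ measurableSet_Iic, ← setLIntegral_congr Iio_ae_eq_Iic]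
  exact lintegral_gammaPDF_of_nonpos le_rfl

lemma ae_nonneg_gammaMeasure (a r : ℝ) : ∀ᵐ x ∂gammaMeasure a r, 0 ≤ x :=
  ae_iff.mpr <| measure_mono_null (fun x (hx : ¬0 ≤ x) => (not_le.mp hx).le)
    (gammaMeasure_Iic_zero a r)

lemma gammaMeasure_Iic_eq_Ioc {a r t : ℝ} (ht : 0 ≤ t) :
    gammaMeasure a r (Iic t) = gammaMeasure a r (Ioc 0 t) := by
  rw [← Iic_union_Ioc_eq_Iic ht]
  exact measure_congr (union_ae_eq_right_of_ae_eq_empty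
    (ae_eq_empty.mpr (gammaMeasure_Iic_zero a r)))

lemma gammaMeasure_two_one_real_Ioc {s t : ℝ} (hs : 0 ≤ s) (hst : s ≤ t) :
    (gammaMeasure 2 1).real (Ioc s t) = ∫ x in s..t, x * exp (-x) := by
  have hpdf : EqOn (gammaPDF 2 1) (fun x => ENNReal.ofReal (x * exp (-x))) (Ioc s t) := by
    intro x hx
    rw [gammaPDF_of_nonneg (hs.trans hx.1.le)]
    norm_num [Real.Gamma_two]
  have hnonneg : ∀ x ∈ Ioc s t, 0 ≤ x * exp (-x) := fun x hx =>
    mul_nonneg (hs.trans hx.1.le) (exp_pos _).le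
  rw [measureReal_def, gammaMeasure, withDensity_apply _ measurableSet_Ioc,
    setLIntegral_congr_fun measurableSet_Ioc hpdf, intervalIntegral.integral_of_le hst,
    ← ofReal_integral_eq_lintegral_ofReal
      (by fun_prop : Continuous fun x : ℝ => x * exp (-x)).integrableOn_Ioc
      (ae_restrict_of_forall_mem measurableSet_Ioc hnonneg),
    ENNReal.toReal_ofReal (setIntegral_nonneg measurableSet_Ioc hnonneg)]

lemma gammaMeasure_two_one_real_Iic_le {t : ℝ} (ht : 0 ≤ t) :
    (gammaMeasure 2 1).real (Iic t) ≤ t ^ 2 / 2 := by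
  rw [measureReal_def, gammaMeasure_Iic_eq_Ioc ht, ← measureReal_def,
    gammaMeasure_two_one_real_Ioc le_rfl ht]
  calc ∫ x in (0 : ℝ)..t, x * exp (-x) ≤ ∫ x in (0 : ℝ)..t, x := by
        refine intervalIntegral.integral_mono_on ht
          ((by fun_prop : Continuous _).intervalIntegrable _ _)
          ((by fun_prop : Continuous _).intervalIntegrable _ _) fun x hx => ?_
        exact mul_le_of_le_one_right hx.1 (exp_le_one_iff.mpr (neg_nonpos.mpr hx.1))
    _ = t ^ 2 / 2 := by simp [integral_id]

lemma le_gammaMeasure_two_one_real_Ioc_half {b : ℝ} (hb0 : 0 ≤ b) (hb1 : b ≤ 1) :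
    b ^ 2 / 8 ≤ (gammaMeasure 2 1).real (Ioc (b / 2) b) := by
  rw [gammaMeasure_two_one_real_Ioc (by positivity) (by linarith)]
  have hexp : 1 / 3 ≤ exp (-1) := by
    rw [exp_neg, inv_eq_one_div]
    exact one_div_le_one_div_of_le (exp_pos 1) exp_one_lt_d9.le |>.trans' (by norm_num)
  calc b ^ 2 / 8 ≤ exp (-1) * (3 * b ^ 2 / 8) := by nlinarith
    _ = ∫ x in (b / 2)..b, x * exp (-1) := by
        rw [intervalIntegral.integral_mul_const, integral_id]; ring
    _ ≤ ∫ x in (b / 2)..b, x * exp (-x) := by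
        refine intervalIntegral.integral_mono_on (by linarith)
          ((by fun_prop : Continuous _).intervalIntegrable _ _)
          ((by fun_prop : Continuous _).intervalIntegrable _ _) fun x hx => ?_
        exact mul_le_mul_of_nonneg_left (exp_le_exp.mpr (by linarith [hx.2]))
          (by linarith [hx.1])

instance : IsProbabilityMeasure (expMeasure 1) := isProbabilityMeasure_expMeasure one_pos

instance : IsProbabilityMeasure (gammaMeasure 2 1) :=
  isProbabilityMeasure_gammaMeasure two_pos one_pos

section Independence

variable {Ω β : Type*} [MeasurableSpace Ω] [MeasurableSpace β] {μ : Measure Ω}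

lemma measure_preimage_of_map_eq {f : Ω → β} {ν : Measure β} [NeZero ν] (hf : μ.map f = ν)
    {s : Set β} (hs : MeasurableSet s) : μ (f ⁻¹' s) = ν s := by
  rw [← Measure.map_apply_of_aemeasurable (.of_map_ne_zero (hf ▸ NeZero.ne ν)) hs, hf]

lemma ae_of_map_eq {f : Ω → β} {ν : Measure β} [NeZero ν] (hf : μ.map f = ν) {p : β → Prop}
    (hp : ∀ᵐ y ∂ν, p y) : ∀ᵐ ω ∂μ, p (f ω) :=
  ae_of_ae_map (.of_map_ne_zero (hf ▸ NeZero.ne ν)) (hf ▸ hp)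

lemma ProbabilityTheory.iIndepFun.measure_four {f₀ f₁ f₂ f₃ : Ω → β}
    (h : iIndepFun ![f₀, f₁, f₂, f₃] μ) {s₀ s₁ s₂ s₃ : Set β} (h₀ : MeasurableSet s₀)
    (h₁ : MeasurableSet s₁) (h₂ : MeasurableSet s₂) (h₃ : MeasurableSet s₃) :
    μ {ω | f₀ ω ∈ s₀ ∧ f₁ ω ∈ s₁ ∧ f₂ ω ∈ s₂ ∧ f₃ ω ∈ s₃}
      = μ (f₀ ⁻¹' s₀) * μ (f₁ ⁻¹' s₁) * μ (f₂ ⁻¹' s₂) * μ (f₃ ⁻¹' s₃) := by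
  have hset : {ω | f₀ ω ∈ s₀ ∧ f₁ ω ∈ s₁ ∧ f₂ ω ∈ s₂ ∧ f₃ ω ∈ s₃}
      = ⋂ i ∈ Finset.univ, ![f₀, f₁, f₂, f₃] i ⁻¹' ![s₀, s₁, s₂, s₃] i := by
    ext ω
    simp [Fin.forall_fin_succ]
  rw [hset, h.measure_inter_preimage_eq_mul _ fun i _ => by fin_cases i <;> assumption,
    Fin.prod_univ_four]
  rfl

end Independence

section ChannelGains

variable {Ω : Type*} [MeasureSpace Ω] {W X Y Z : Ω → ℝ}

structure FadingGains (W X Y Z : Ω → ℝ) : Prop where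
  indep : iIndepFun ![W, X, Y, Z] ℙ
  map_W : Measure.map W ℙ = expMeasure 1
  map_X : Measure.map X ℙ = gammaMeasure 2 1
  map_Y : Measure.map Y ℙ = expMeasure 1
  map_Z : Measure.map Z ℙ = expMeasure 1

namespace FadingGains

lemma toReal_measure_eq_mul (h : FadingGains W X Y Z) {s₀ s₁ s₂ s₃ : Set ℝ} (h₀ : MeasurableSet s₀)
    (h₁ : MeasurableSet s₁) (h₂ : MeasurableSet s₂) (h₃ : MeasurableSet s₃) :
    (ℙ {ω | W ω ∈ s₀ ∧ X ω ∈ s₁ ∧ Y ω ∈ s₂ ∧ Z ω ∈ s₃}).toReal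
      = (expMeasure 1).real s₀ * (gammaMeasure 2 1).real s₁ * (expMeasure 1).real s₂
          * (expMeasure 1).real s₃ := by
  simp only [measureReal_def, h.indep.measure_four h₀ h₁ h₂ h₃, ENNReal.toReal_mul,
    measure_preimage_of_map_eq h.map_W h₀, measure_preimage_of_map_eq h.map_X h₁,
    measure_preimage_of_map_eq h.map_Y h₂, measure_preimage_of_map_eq h.map_Z h₃]

lemma ae_nonneg (h : FadingGains W X Y Z) : ∀ᵐ ω, 0 ≤ X ω ∧ 0 ≤ Y ω ∧ 0 ≤ Z ω := by
  filter_upwards [ae_of_map_eq h.map_X (ae_nonneg_gammaMeasure 2 1),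
    ae_of_map_eq h.map_Y (ae_nonneg_gammaMeasure 1 1),
    ae_of_map_eq h.map_Z (ae_nonneg_gammaMeasure 1 1)] with ω hX hY hZ
  exact ⟨hX, hY, hZ⟩

variable [IsProbabilityMeasure (ℙ : Measure Ω)]

lemma toReal_measure_event_le (h : FadingGains W X Y Z) {ρ a b c : ℝ} (hρ : 0 ≤ ρ) (ha : 0 ≤ a)
    (hb : 0 ≤ b) (hc : 0 ≤ c) :
    (ℙ {ω | W ω ≤ a ∧ X ω ≤ b ∧ Y ω + Z ω / (1 + ρ * X ω) ≤ c}).toReal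
      ≤ a * (b ^ 2 / 2) * c * min 1 (c + ρ * b * c) := by
  have hsub : {ω | W ω ≤ a ∧ X ω ≤ b ∧ Y ω + Z ω / (1 + ρ * X ω) ≤ c} ≤ᵐ[ℙ]
      {ω | W ω ∈ Iic a ∧ X ω ∈ Iic b ∧ Y ω ∈ Iic c ∧ Z ω ∈ Iic (c + ρ * b * c)} := by
    filter_upwards [h.ae_nonneg] with ω ⟨hX, hY, hZ⟩ ⟨hWa, hXb, hsum⟩
    have hden : 0 < 1 + ρ * X ω := by positivity
    have hZc : Z ω ≤ c * (1 + ρ * X ω) := by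
      rw [← div_le_iff₀ hden]; linarith
    refine ⟨hWa, hXb, mem_Iic.mpr (by linarith [div_nonneg hZ hden.le]), hZc.trans ?_⟩
    nlinarith [mul_le_mul_of_nonneg_left hXb (mul_nonneg hc hρ)]
  calc _ ≤ (ℙ {ω | W ω ∈ Iic a ∧ X ω ∈ Iic b ∧ Y ω ∈ Iic c
          ∧ Z ω ∈ Iic (c + ρ * b * c)}).toReal :=
        ENNReal.toReal_mono (measure_ne_top _ _) (measure_mono_ae hsub)
    _ = (expMeasure 1).real (Iic a) * (gammaMeasure 2 1).real (Iic b)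
          * (expMeasure 1).real (Iic c) * (expMeasure 1).real (Iic (c + ρ * b * c)) :=
        h.toReal_measure_eq_mul measurableSet_Iic measurableSet_Iic measurableSet_Iic
          measurableSet_Iic
    _ ≤ _ := by
        gcongr
        · exact (expMeasure_one_real_Iic_le_min ha).trans (min_le_right _ _)
        · exact gammaMeasure_two_one_real_Iic_le hb
        · exact (expMeasure_one_real_Iic_le_min hc).trans (min_le_right _ _)
        · exact expMeasure_one_real_Iic_le_min (by positivity)

lemma le_toReal_measure_event (h : FadingGains W X Y Z) {ρ a b c : ℝ} (hρ : 0 ≤ ρ) (ha₀ : 0 ≤ a)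
    (ha₁ : a ≤ 1) (hb₀ : 0 ≤ b) (hb₁ : b ≤ 1) (hc₀ : 0 ≤ c) (hc₁ : c ≤ 1) :
    a * b ^ 2 * c * min 1 (ρ * b * c) / 512
      ≤ (ℙ {ω | W ω ≤ a ∧ X ω ≤ b ∧ Y ω + Z ω / (1 + ρ * X ω) ≤ c}).toReal := by
  set u := c / 2 * (1 + ρ * (b / 2))
  have hsub : {ω | W ω ∈ Iic a ∧ X ω ∈ Ioc (b / 2) b ∧ Y ω ∈ Iic (c / 2) ∧ Z ω ∈ Iic u}
      ⊆ {ω | W ω ≤ a ∧ X ω ≤ b ∧ Y ω + Z ω / (1 + ρ * X ω) ≤ c} := by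
    rintro ω ⟨hWa, ⟨hXb₀, hXb⟩, hYc, hZu⟩
    have hX : 0 ≤ X ω := by linarith
    have hZc : Z ω / (1 + ρ * X ω) ≤ c / 2 := by
      rw [div_le_iff₀ (by positivity)]
      exact (mem_Iic.mp hZu).trans (by simp only [u]; gcongr)
    exact ⟨hWa, hXb, by linarith [mem_Iic.mp hYc]⟩
  have hZ : min 1 (ρ * b * c) / 8 ≤ (expMeasure 1).real (Iic u) := by
    have hu : ρ * b * c / 4 ≤ u := by
      simp only [u]; nlinarith [mul_nonneg (mul_nonneg hρ hb₀) hc₀]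
    calc min 1 (ρ * b * c) / 8 ≤ min 1 (ρ * b * c / 4) / 2 := by
          rw [le_div_iff₀ (by norm_num)]
          rcases le_total 1 (ρ * b * c / 4) with h' | h'
          · rw [min_eq_left h']; linarith [min_le_left 1 (ρ * b * c)]
          · rw [min_eq_right h']; linarith [min_le_right 1 (ρ * b * c)]
      _ ≤ min 1 u / 2 := by linarith [min_le_min_left 1 hu]
      _ ≤ _ := min_one_div_two_le_expMeasure_one_real_Iic (by positivity)
  calc a * b ^ 2 * c * min 1 (ρ * b * c) / 512
        = min 1 a / 2 * (b ^ 2 / 8) * (min 1 (c / 2) / 2) * (min 1 (ρ * b * c) / 8) := by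
          rw [min_eq_right ha₁, min_eq_right (show c / 2 ≤ 1 by linarith)]; ring
    _ ≤ (expMeasure 1).real (Iic a) * (gammaMeasure 2 1).real (Ioc (b / 2) b)
          * (expMeasure 1).real (Iic (c / 2)) * (expMeasure 1).real (Iic u) := by
        gcongr
        · exact min_one_div_two_le_expMeasure_one_real_Iic ha₀
        · exact le_gammaMeasure_two_one_real_Ioc_half hb₀ hb₁
        · exact min_one_div_two_le_expMeasure_one_real_Iic (by positivity)
    _ = _ := (h.toReal_measure_eq_mul measurableSet_Iic measurableSet_Ioc measurableSet_Iic
          measurableSet_Iic).symm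
    _ ≤ _ := ENNReal.toReal_mono (measure_ne_top _ _) (measure_mono hsub)

end FadingGains

end ChannelGains

lemma min_one_add_le_two_mul_min_one {x y : ℝ} (hxy : x ≤ y) :
    min 1 (x + y) ≤ 2 * min 1 y := by
  rcases le_total 1 y with hy | hy
  · rw [min_eq_left hy]; linarith [min_le_left 1 (x + y)]
  · rw [min_eq_right hy]; linarith [min_le_right 1 (x + y)]

lemma tendsto_log_div_log_of_rpow_bounds {p : ℝ → ℝ} {s c₁ c₂ : ℝ} (hc₁ : 0 < c₁)
    (hc₂ : 0 < c₂) (hp : ∀ᶠ ρ in atTop, c₁ * ρ ^ s ≤ p ρ ∧ p ρ ≤ c₂ * ρ ^ s) :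
    Tendsto (fun ρ => log (p ρ) / log ρ) atTop (𝓝 s) := by
  have hlim (c : ℝ) (hc : 0 < c) : Tendsto (fun ρ => log (c * ρ ^ s) / log ρ) atTop (𝓝 s) := by
    have hconst : Tendsto (fun ρ => s + log c / log ρ) atTop (𝓝 s) := by
      simpa using tendsto_const_nhds.add (tendsto_const_nhds.div_atTop tendsto_log_atTop)
    refine hconst.congr' ?_
    filter_upwards [eventually_gt_atTop 1] with ρ hρ
    rw [log_mul hc.ne' (rpow_pos_of_pos (by linarith) s).ne', log_rpow (by linarith)]
    field_simp [(log_pos hρ).ne']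
    ring
  have hpos : ∀ᶠ ρ in atTop, 0 < c₁ * ρ ^ s ∧ 0 < log ρ := by
    filter_upwards [eventually_gt_atTop 1] with ρ hρ
    exact ⟨mul_pos hc₁ (rpow_pos_of_pos (by linarith) s), log_pos hρ⟩
  refine tendsto_of_tendsto_of_tendsto_of_le_of_le' (hlim c₁ hc₁) (hlim c₂ hc₂) ?_ ?_
  · filter_upwards [hp, hpos] with ρ ⟨hlo, _⟩ ⟨hc₁ρ, hlog⟩
    exact div_le_div_of_nonneg_right (log_le_log hc₁ρ hlo) hlog.le
  · filter_upwards [hp, hpos] with ρ ⟨hlo, hhi⟩ ⟨hc₁ρ, hlog⟩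
    exact div_le_div_of_nonneg_right (log_le_log (hc₁ρ.trans_le hlo) hhi) hlog.le

lemma rpow_mul_min_one_rpow_eq_rpow_neg_sExp {ρ : ℝ} (hρ : 1 ≤ ρ) (η α₁ α₂ αsr : ℝ) :
    ρ ^ (αsr - η) * (ρ ^ (α₁ - 1)) ^ 2 * ρ ^ (α₂ - 1) * min 1 (ρ ^ (α₁ + α₂ - 1))
      = ρ ^ (-sExp η α₁ α₂ αsr) := by
  have hρ₀ : 0 < ρ := one_pos.trans_le hρ
  have hmin : min 1 (ρ ^ (α₁ + α₂ - 1)) = ρ ^ min 0 (α₁ + α₂ - 1) := by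
    rw [(monotone_rpow_of_base_ge_one hρ).map_min, rpow_zero]
  rw [hmin, sq, ← rpow_add hρ₀, ← rpow_add hρ₀, ← rpow_add hρ₀, ← rpow_add hρ₀]
  congr 1
  unfold sExp
  split_ifs with h
  · rw [min_eq_right (by linarith)]; ring
  · rw [min_eq_left (by linarith)]; ring

theorem joint_exponent_lemma1_general (η : ℝ) {Ω : Type*} [MeasureSpace Ω]
    [IsProbabilityMeasure (ℙ : Measure Ω)]
    (W X Y Z : Ω → ℝ)
    (hindep : iIndepFun
      ![W, X, Y, Z] ℙ)
    (hlawW : Measure.map W ℙ = expMeasure 1)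
    (hlawX : Measure.map X ℙ = gammaMeasure 2 1)
    (hlawY : Measure.map Y ℙ = expMeasure 1)
    (hlawZ : Measure.map Z ℙ = expMeasure 1)
    (α₁ α₂ αsr : ℝ) (h₁0 : 0 ≤ α₁) (h₁1 : α₁ < 1) (h₂1 : α₂ < 1)
    (hsrη : αsr < η) :
    Tendsto (fun ρ : ℝ =>
        Real.log (ℙ {ω | W ω ≤ ρ ^ (αsr - η) ∧ X ω ≤ ρ ^ (α₁ - 1) ∧
          Y ω + Z ω / (1 + ρ * X ω) ≤ ρ ^ (α₂ - 1)}).toReal / Real.log ρ)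
      atTop (nhds (-(sExp η α₁ α₂ αsr))) := by
  have hF : FadingGains W X Y Z := ⟨hindep, hlawW, hlawX, hlawY, hlawZ⟩
  refine tendsto_log_div_log_of_rpow_bounds (c₁ := 1 / 512) (c₂ := 1) (by norm_num) one_pos ?_
  filter_upwards [eventually_ge_atTop 1] with ρ hρ
  rw [← rpow_mul_min_one_rpow_eq_rpow_neg_sExp hρ]
  have hρ₀ : 0 < ρ := one_pos.trans_le hρ
  have hle_one (x : ℝ) (hx : x ≤ 0) : ρ ^ x ≤ 1 := rpow_le_one_of_one_le_of_nonpos hρ hx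
  have hbc : ρ * ρ ^ (α₁ - 1) * ρ ^ (α₂ - 1) = ρ ^ (α₁ + α₂ - 1) := by
    nth_rw 1 [← rpow_one ρ]
    rw [← rpow_add hρ₀, ← rpow_add hρ₀]
    ring_nf
  have hcd : ρ ^ (α₂ - 1) ≤ ρ ^ (α₁ + α₂ - 1) := rpow_le_rpow_of_exponent_le hρ (by linarith)
  set a := ρ ^ (αsr - η)
  set b := ρ ^ (α₁ - 1)
  set c := ρ ^ (α₂ - 1)
  constructor
  · calc 1 / 512 * (a * b ^ 2 * c * min 1 (ρ ^ (α₁ + α₂ - 1)))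
        = a * b ^ 2 * c * min 1 (ρ * b * c) / 512 := by rw [hbc]; ring
      _ ≤ _ := hF.le_toReal_measure_event hρ₀.le (by positivity) (hle_one _ (by linarith))
          (by positivity) (hle_one _ (by linarith)) (by positivity) (hle_one _ (by linarith))
  · calc _ ≤ a * (b ^ 2 / 2) * c * min 1 (c + ρ * b * c) :=
          hF.toReal_measure_event_le hρ₀.le (by positivity) (by positivity) (by positivity)
      _ ≤ a * (b ^ 2 / 2) * c * (2 * min 1 (ρ ^ (α₁ + α₂ - 1))) := by
          rw [hbc]; gcongr; exact min_one_add_le_two_mul_min_one hcd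
      _ = 1 * (a * b ^ 2 * c * min 1 (ρ ^ (α₁ + α₂ - 1))) := by ring

/-- Cumulative-distribution form of Lemma 1: with `W = |h_sr|² ~ Exp(1)`,
`X = ‖h_s‖² ~ Gamma(2,1)`, `Y = ‖h_{r⊥s}‖² ~ Exp(1)`, `Z = ‖h_{r∥s}‖² ~ Exp(1)`
mutually independent, the event
`{W ≤ ρ^{α_sr−η}, X ≤ ρ^{α₁−1}, Y + Z/(1+ρX) ≤ ρ^{α₂−1}}`
has high-SNR exponential order `ρ^{−s(α₁,α₂,α_sr)}`. -/
theorem joint_exponent_lemma1 (η : ℝ) (hη : 1 ≤ η) {Ω : Type*} [MeasureSpace Ω]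
    [IsProbabilityMeasure (ℙ : Measure Ω)]
    (W X Y Z : Ω → ℝ) (hW : Measurable W) (hX : Measurable X)
    (hY : Measurable Y) (hZ : Measurable Z)
    (hindep : iIndepFun
      ![W, X, Y, Z] ℙ)
    (hlawW : Measure.map W ℙ = expMeasure 1)
    (hlawX : Measure.map X ℙ = gammaMeasure 2 1)
    (hlawY : Measure.map Y ℙ = expMeasure 1)
    (hlawZ : Measure.map Z ℙ = expMeasure 1)
    (α₁ α₂ αsr : ℝ) (h₁0 : 0 ≤ α₁) (h₁1 : α₁ < 1) (h₂0 : 0 ≤ α₂) (h₂1 : α₂ < 1)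
    (hsr0 : 0 ≤ αsr) (hsrη : αsr < η) :
    Tendsto (fun ρ : ℝ =>
        Real.log (ℙ {ω | W ω ≤ ρ ^ (αsr - η) ∧ X ω ≤ ρ ^ (α₁ - 1) ∧
          Y ω + Z ω / (1 + ρ * X ω) ≤ ρ ^ (α₂ - 1)}).toReal / Real.log ρ)
      atTop (nhds (-(sExp η α₁ α₂ αsr))) :=
  joint_exponent_lemma1_general η W X Y Z hindep hlawW hlawX hlawY hlawZ α₁ α₂ αsr h₁0 h₁1 h₂1 hsrη
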